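/- Let R ∈ ℝ^{N×N} be symmetric positive definite, C* ∈ ℝ^{m×m} symmetric positive definite, and U ∈ ℝ^{N×m} arbitrary. Then tr( Uᵀ R^{-1} U (C* + Uᵀ R^{-1} U)^{-1} ) ≤ m. -/

import Mathlib

/-!
Writing `S = C + B`, we have `B S⁻¹ = 1 - C S⁻¹`, and `tr (C S⁻¹) ≥ 0` because the trace of a
product of two positive semidefinite matrices is nonnegative: factoring `C = Xᴴ X` gives
`tr (Xᴴ X S⁻¹) = tr (X S⁻¹ Xᴴ)`.
-/

open Matrix
open scoped ComplexOrder MatrixOrder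

namespace Matrix

variable {n 𝕜 : Type*} [Fintype n] [RCLike 𝕜]

theorem PosSemidef.trace_mul_nonneg {A B : Matrix n n 𝕜} (hA : A.PosSemidef)
    (hB : B.PosSemidef) : 0 ≤ (A * B).trace := by
  classical
  obtain ⟨X, rfl⟩ := CStarAlgebra.nonneg_iff_eq_star_mul_self.mp hA.nonneg
  rw [mul_assoc, trace_mul_comm, mul_assoc]
  simpa only [star_eq_conjTranspose, mul_assoc] using
    (hB.mul_mul_conjTranspose_same X).trace_nonneg

theorem PosSemidef.trace_mul_inv_add_le [DecidableEq n] {A B : Matrix n n 𝕜}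
    (hA : A.PosSemidef) (hB : B.PosSemidef) :
    (B * (A + B)⁻¹).trace ≤ Fintype.card n := by
  by_cases hS : IsUnit (A + B).det
  · have hsplit : B * (A + B)⁻¹ = 1 - A * (A + B)⁻¹ := by
      rw [← mul_nonsing_inv _ hS, add_mul, add_sub_cancel_left]
    rw [hsplit, trace_sub, trace_one, sub_le_self_iff]
    exact hA.trace_mul_nonneg (hA.add hB).inv
  · rw [nonsing_inv_apply_not_isUnit _ hS, mul_zero, trace_zero]
    exact_mod_cast Nat.zero_le _

end Matrix

/-- Intermediate trace claim in the proof of Proposition 1: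
`tr(Uᵀ R⁻¹ U (C* + Uᵀ R⁻¹ U)⁻¹) ≤ m` for PD `R`, PD `C*` and arbitrary `U`. -/
theorem trace_le_of_posDef
    {N m : ℕ} (R : Matrix (Fin N) (Fin N) ℝ) (hR : R.PosDef)
    (Cstar : Matrix (Fin m) (Fin m) ℝ) (hCstar : Cstar.PosDef)
    (U : Matrix (Fin N) (Fin m) ℝ) :
    (Uᵀ * R⁻¹ * U * (Cstar + Uᵀ * R⁻¹ * U)⁻¹).trace ≤ (m : ℝ) := by
  have hB : (Uᵀ * R⁻¹ * U).PosSemidef := by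
    simpa only [conjTranspose_eq_transpose_of_trivial] using
      hR.posSemidef.inv.conjTranspose_mul_mul_same U
  simpa using hCstar.posSemidef.trace_mul_inv_add_le hB
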